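/- Minimality transfers under projection: with g the perturbation-encoding of f over perturbable set X, if m is a minimal trap space of g and σ is the perturbation decoded from m's values on {v^k, v^o}, then the restriction of m to V is a minimal trap space of f^σ. -/

import Mathlib

/-- A state `s` belongs to the subspace `m` (none = free/⋆). -/
def inSub {V : Type*} (m : V → Option Bool) (s : V → Bool) : Prop :=
  ∀ v b, m v = some b → s v = b

/-- The synchronous update of a Boolean network. -/
def syncUpdate {V : Type*} (f : V → (V → Bool) → Bool) (s : V → Bool) : V → Bool :=
  fun v => f v s

/-- `m` is a trap space: `S[m]` is closed under the synchronous update. -/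
def IsTrapSpace {V : Type*} (f : V → (V → Bool) → Bool) (m : V → Option Bool) : Prop :=
  ∀ s, inSub m s → inSub m (syncUpdate f s)

/-- Boolean expressions over a variable set `V`. -/
inductive BExpr (V : Type*) where
  | const : Bool → BExpr V
  | var : V → BExpr V
  | not : BExpr V → BExpr V
  | and : BExpr V → BExpr V → BExpr V
  | or : BExpr V → BExpr V → BExpr V

/-- Two-valued evaluation of a Boolean expression at a state. -/
def BExpr.eval {V : Type*} : BExpr V → (V → Bool) → Bool
  | .const b, _ => b
  | .var v, s => s v
  | .not e, s => !(e.eval s)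
  | .and e₁ e₂, s => e₁.eval s && e₂.eval s
  | .or e₁ e₂, s => e₁.eval s || e₂.eval s

/-- Minimum w.r.t. the total order 0 <_t ⋆ <_t 1 (⋆ = none). -/
def tmin : Option Bool → Option Bool → Option Bool
  | some false, _ => some false
  | _, some false => some false
  | some true, y => y
  | x, some true => x
  | none, none => none

/-- Maximum w.r.t. the total order 0 <_t ⋆ <_t 1 (⋆ = none). -/
def tmax : Option Bool → Option Bool → Option Bool
  | some true, _ => some true
  | _, some true => some true
  | some false, y => y
  | x, some false => x
  | none, none => none

/-- Kleene three-valued evaluation of a Boolean expression under a subspace. -/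
def BExpr.keval {V : Type*} : BExpr V → (V → Option Bool) → Option Bool
  | .const b, _ => some b
  | .var v, m => m v
  | .not e, m => (e.keval m).map (fun b => !b)
  | .and e₁ e₂, m => tmin (e₁.keval m) (e₂.keval m)
  | .or e₁ e₂, m => tmax (e₁.keval m) (e₂.keval m)

/-- The partial order ≤_s on {0,1,⋆}: x ≤_s y iff x = y or y = ⋆. -/
def leS (x y : Option Bool) : Prop := x = y ∨ y = none

/-- Trap space via the three-valued characterization: m(f_v) ≤_s m(v) for all v. -/
def IsTrapK {V : Type*} (f : V → BExpr V) (m : V → Option Bool) : Prop :=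
  ∀ v, leS ((f v).keval m) (m v)

/-- ≤_s-minimal trap space (three-valued characterization). -/
def IsMinTrapK {V : Type*} (f : V → BExpr V) (m : V → Option Bool) : Prop :=
  IsTrapK f m ∧ ∀ m', IsTrapK f m' → (∀ v, leS (m' v) (m v)) → m' = m

/-- Renaming of variables in a Boolean expression. -/
def BExpr.map {V W : Type*} (φ : V → W) : BExpr V → BExpr W
  | .const b => .const b
  | .var v => .var (φ v)
  | .not e => .not (e.map φ)
  | .and e₁ e₂ => .and (e₁.map φ) (e₂.map φ)
  | .or e₁ e₂ => .or (e₁.map φ) (e₂.map φ)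

/-- Variables of the perturbation-encoding network: original variables plus,
for each perturbable `v ∈ X`, variables `v^k = inr (v, true)` and `v^o = inr (v, false)`. -/
abbrev PVar (V : Type) (X : Finset V) := V ⊕ ({v : V // v ∈ X} × Bool)

/-- The perturbation-encoding network `g` of `f` w.r.t. perturbable set `X`:
`g_{v^k} = v^k`, `g_{v^o} = v^o ∧ ¬v^k`, `g_v = ¬v^k ∧ (v^o ∨ f_v)` for `v ∈ X`,
and `g_u = f_u` otherwise. -/
def pertEnc {V : Type} [DecidableEq V] (f : V → BExpr V) (X : Finset V) :
    PVar V X → BExpr (PVar V X)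
  | .inl v =>
      if h : v ∈ X then
        .and (.not (.var (.inr (⟨v, h⟩, true))))
          (.or (.var (.inr (⟨v, h⟩, false))) ((f v).map .inl))
      else (f v).map .inl
  | .inr (x, true) => .var (.inr (x, true))
  | .inr (x, false) => .and (.var (.inr (x, false))) (.not (.var (.inr (x, true))))

/-- The perturbed network `f^σ`: perturbed variables get the constant `σ(v)`,
unperturbed ones (σ(v) = ⋆) keep `f_v`. -/
def pertNet {V : Type} [DecidableEq V] (f : V → BExpr V) (X : Finset V)
    (σ : {v : V // v ∈ X} → Option Bool) : V → BExpr V := fun v =>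
  if h : v ∈ X then
    match σ ⟨v, h⟩ with
    | some b => .const b
    | none => f v
  else f v

/-- Decode the perturbation from the values of `v^k` and `v^o`:
σ(v) = 1 iff (k,o) = (0,1); σ(v) = 0 iff (k,o) = (1,0); σ(v) = ⋆ iff (k,o) = (0,0). -/
def decodePert (k o : Option Bool) : Option Bool :=
  if k = some false ∧ o = some true then some true
  else if k = some true ∧ o = some false then some false
  else none

/-! Kleene evaluation is monotone for `≤_s`, so refining a trap space at variables
whose own update functions stay trapped gives again a trap space. In the encoding `g` each
`v^k` is a self-loop, and fixing `v^k, v^o` to Boolean values (never both `1`) keeps `g_{v^o}`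
trapped; minimality of `m` therefore forces these values already. Once the encoding variables
carry such a code, `g_v` evaluates exactly like `f^σ_v`, so trap spaces of `g` with that code
are the trap spaces of `f^σ`, and minimality transfers. -/

lemma leS_refl (x : Option Bool) : leS x x := Or.inl rfl

lemma leS_trans {x y z : Option Bool} (hxy : leS x y) (hyz : leS y z) : leS x z := by
  rcases hxy with rfl | rfl
  · exact hyz
  · rcases hyz with rfl | rfl <;> exact Or.inr rfl

lemma tmin_mono {x x' y y' : Option Bool} (hx : leS x' x) (hy : leS y' y) :
    leS (tmin x' y') (tmin x y) := by
  unfold leS at *; revert x x' y y'; decide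

lemma tmax_mono {x x' y y' : Option Bool} (hx : leS x' x) (hy : leS y' y) :
    leS (tmax x' y') (tmax x y) := by
  unfold leS at *; revert x x' y y'; decide

@[simp] lemma tmin_some_false (y : Option Bool) : tmin (some false) y = some false := rfl
@[simp] lemma tmin_some_true (y : Option Bool) : tmin (some true) y = y := by
  rcases y with _ | _ | _ <;> rfl
@[simp] lemma tmax_some_true (y : Option Bool) : tmax (some true) y = some true := rfl
@[simp] lemma tmax_some_false (y : Option Bool) : tmax (some false) y = y := by
  rcases y with _ | _ | _ <;> rfl

lemma BExpr.keval_mono {V : Type*} {m m' : V → Option Bool} (hle : ∀ v, leS (m' v) (m v)) :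
    ∀ e : BExpr V, leS (e.keval m') (e.keval m)
  | .const _ => leS_refl _
  | .var v => hle v
  | .not e => by
    rcases e.keval_mono hle with h | h
    · exact Or.inl (congrArg (Option.map _) h)
    · simp [BExpr.keval, h, leS]
  | .and e₁ e₂ => tmin_mono (e₁.keval_mono hle) (e₂.keval_mono hle)
  | .or e₁ e₂ => tmax_mono (e₁.keval_mono hle) (e₂.keval_mono hle)

lemma BExpr.keval_map {V W : Type*} (φ : V → W) (m : W → Option Bool) :
    ∀ e : BExpr V, (e.map φ).keval m = e.keval (m ∘ φ)
  | .const _ => rfl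
  | .var _ => rfl
  | .not e => by simp [BExpr.map, BExpr.keval, e.keval_map]
  | .and e₁ e₂ => by simp [BExpr.map, BExpr.keval, e₁.keval_map, e₂.keval_map]
  | .or e₁ e₂ => by simp [BExpr.map, BExpr.keval, e₁.keval_map, e₂.keval_map]

lemma leS_update {V : Type*} [DecidableEq V] {m : V → Option Bool} {a : V} {b : Option Bool}
    (hb : leS b (m a)) (u : V) : leS (Function.update m a b u) (m u) := by
  rcases eq_or_ne u a with rfl | hu
  · simpa using hb
  · simpa [hu] using leS_refl (m u)

lemma IsTrapK.update {V : Type*} [DecidableEq V] {f : V → BExpr V} {m : V → Option Bool}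
    (hm : IsTrapK f m) {a : V} {b : Option Bool} (hb : leS b (m a))
    (ha : leS ((f a).keval (Function.update m a b)) b) : IsTrapK f (Function.update m a b) := by
  intro u
  rcases eq_or_ne u a with rfl | hu
  · simpa using ha
  · rw [Function.update_of_ne hu]
    exact leS_trans ((f u).keval_mono (leS_update hb)) (hm u)

lemma exists_code_le_of_leS_tmin {x y : Option Bool} (h : leS (tmin y (x.map not)) y) :
    ∃ k o : Bool, leS (some k) x ∧ leS (some o) y ∧ !(k && o) := by
  unfold leS at *; revert x y; decide

def IsPertCode {ι : Type*} (ν : ι × Bool → Option Bool) : Prop :=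
  ∀ x, ∃ k o : Bool, ν (x, true) = some k ∧ ν (x, false) = some o ∧ !(k && o)

section PertEnc

variable {V : Type} [DecidableEq V] (f : V → BExpr V) (X : Finset V)

lemma keval_pertEnc_inl {μ : V → Option Bool} {ν : {v : V // v ∈ X} × Bool → Option Bool}
    (hν : IsPertCode ν) (v : V) :
    (pertEnc f X (.inl v)).keval (Sum.elim μ ν) =
      (pertNet f X (fun x => decodePert (ν (x, true)) (ν (x, false))) v).keval μ := by
  by_cases hv : v ∈ X
  · obtain ⟨k, o, hk, ho, hko⟩ := hν ⟨v, hv⟩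
    simp only [pertEnc, pertNet, dif_pos hv, BExpr.keval, BExpr.keval_map, Sum.elim_comp_inl,
      Sum.elim_inr, hk, ho, Option.map_some]
    cases k <;> cases o <;> simp_all [decodePert, BExpr.keval]
  · simp [pertEnc, pertNet, dif_neg hv, BExpr.keval_map]

lemma isTrapK_pertEnc_inr {μ : V → Option Bool} {ν : {v : V // v ∈ X} × Bool → Option Bool}
    (hν : IsPertCode ν) (z : {v : V // v ∈ X} × Bool) :
    leS ((pertEnc f X (.inr z)).keval (Sum.elim μ ν)) (ν z) := by
  obtain ⟨x, _ | _⟩ := z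
  · obtain ⟨k, o, hk, ho, hko⟩ := hν x
    simp only [pertEnc, BExpr.keval, Sum.elim_inr, hk, ho, Option.map_some]
    cases k <;> cases o <;> simp_all [leS]
  · exact leS_refl _

lemma isTrapK_pertEnc_iff {μ : V → Option Bool} {ν : {v : V // v ∈ X} × Bool → Option Bool}
    (hν : IsPertCode ν) :
    IsTrapK (pertEnc f X) (Sum.elim μ ν) ↔
      IsTrapK (pertNet f X (fun x => decodePert (ν (x, true)) (ν (x, false)))) μ := by
  constructor
  · intro h v
    simpa only [keval_pertEnc_inl f X hν, Sum.elim_inl] using h (.inl v)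
  · rintro h (v | z)
    · simpa only [keval_pertEnc_inl f X hν, Sum.elim_inl] using h v
    · exact isTrapK_pertEnc_inr f X hν z

lemma IsMinTrapK.isPertCode_pertEnc {m : PVar V X → Option Bool}
    (hm : IsMinTrapK (pertEnc f X) m) : IsPertCode (m ∘ Sum.inr) := by
  intro x
  have hx := hm.1 (.inr (x, false))
  simp only [pertEnc, BExpr.keval] at hx
  obtain ⟨k, o, hk, ho, hko⟩ := exists_code_le_of_leS_tmin hx
  set mk := Function.update m (.inr (x, true)) (some k)
  set mko := Function.update mk (.inr (x, false)) (some o)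
  have hne : (Sum.inr (x, false) : PVar V X) ≠ .inr (x, true) := by simp
  have ho' : leS (some o) (mk (.inr (x, false))) := by simpa [mk, hne] using ho
  have htrap : IsTrapK (pertEnc f X) mko := by
    refine (hm.1.update hk (by simp [pertEnc, BExpr.keval, leS_refl])).update ho' ?_
    have : tmin (some o) (some !k) = some o := by cases k <;> cases o <;> simp_all
    simp [pertEnc, BExpr.keval, hne.symm, this, leS_refl]
  have heq : mko = m :=
    hm.2 mko htrap fun u => leS_trans (leS_update ho' u) (leS_update hk u)
  refine ⟨k, o, ?_, ?_, hko⟩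
  · rw [← heq]; simp [mko, mk, hne.symm]
  · rw [← heq]; simp [mko]

end PertEnc

theorem minimal_trap_space_projection_general {V : Type} [DecidableEq V]
    (f : V → BExpr V) (X : Finset V) (m : PVar V X → Option Bool)
    (hm : IsMinTrapK (pertEnc f X) m) :
    IsMinTrapK
      (pertNet f X (fun x => decodePert (m (.inr (x, true))) (m (.inr (x, false)))))
      (fun v => m (.inl v)) := by
  have hcode := hm.isPertCode_pertEnc f X
  have hsplit : Sum.elim (m ∘ Sum.inl) (m ∘ Sum.inr) = m := Sum.elim_comp_inl_inr m
  refine ⟨?_, fun μ hμ hle => ?_⟩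
  · exact (isTrapK_pertEnc_iff f X hcode).1 (hsplit ▸ hm.1)
  · have htrap : IsTrapK (pertEnc f X) (Sum.elim μ (m ∘ Sum.inr)) :=
      (isTrapK_pertEnc_iff f X hcode).2 hμ
    have hle' : ∀ u, leS (Sum.elim μ (m ∘ Sum.inr) u) (m u) :=
      Sum.forall.2 ⟨hle, fun _ => leS_refl _⟩
    funext v
    exact congrFun (hm.2 _ htrap hle') (.inl v)

/-- Minimality transfers under projection: if `m` is a minimal trap space of the
perturbation-encoding network `g` and `σ` is the perturbation decoded from `m`'s
values on the encoding variables, then the restriction of `m` to `V` is a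
minimal trap space of `f^σ`. -/
theorem minimal_trap_space_projection {V : Type} [Fintype V] [DecidableEq V]
    (f : V → BExpr V) (X : Finset V) (m : PVar V X → Option Bool)
    (hm : IsMinTrapK (pertEnc f X) m) :
    IsMinTrapK
      (pertNet f X (fun x => decodePert (m (.inr (x, true))) (m (.inr (x, false)))))
      (fun v => m (.inl v)) :=
  minimal_trap_space_projection_general f X m hm
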